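/- arXiv:2303.02892 — 3 statements merged into one kernel-verified Lean document; each statement's English description precedes it below -/
import Mathlib

section
/- Let b > 0 and let μ, μ', t be real numbers. Then the Laplace density satisfies the pointwise ratio bound (1/(2b)) * exp(-|t - μ|/b) ≤ exp(|μ - μ'|/b) * (1/(2b)) * exp(-|t - μ'|/b). In particular, if S > 0, ε > 0, b = S/ε and |μ - μ'| ≤ S, then (1/(2b)) * exp(-|t - μ|/b) ≤ exp(ε) * (1/(2b)) * exp(-|t - μ'|/b). -/
open Real

/-- Pointwise density-ratio bound for the Laplace density, and the resulting
ε-DP bound when `b = S/ε` and `|μ - μ'| ≤ S`. -/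
theorem laplace_density_ratio_bound (b μ μ' t : ℝ) (hb : 0 < b) :
    (1 / (2 * b)) * Real.exp (-|t - μ| / b) ≤
      Real.exp (|μ - μ'| / b) * ((1 / (2 * b)) * Real.exp (-|t - μ'| / b)) ∧
    ∀ S ε : ℝ, 0 < S → 0 < ε → b = S / ε → |μ - μ'| ≤ S →
      (1 / (2 * b)) * Real.exp (-|t - μ| / b) ≤
        Real.exp ε * ((1 / (2 * b)) * Real.exp (-|t - μ'| / b)) := by
  have hc : 0 ≤ 1 / (2 * b) := by positivity
  have key : (1 / (2 * b)) * Real.exp (-|t - μ| / b) ≤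
      Real.exp (|μ - μ'| / b) * ((1 / (2 * b)) * Real.exp (-|t - μ'| / b)) := by
    rw [mul_left_comm, ← Real.exp_add]
    apply mul_le_mul_of_nonneg_left _ hc
    apply Real.exp_le_exp.mpr
    have h : |t - μ'| ≤ |t - μ| + |μ - μ'| := by
      calc |t - μ'| = |(t - μ) + (μ - μ')| := by ring_nf
        _ ≤ |t - μ| + |μ - μ'| := abs_add_le _ _
    rw [← add_div, div_le_div_iff_of_pos_right hb] at *
    linarith
  refine ⟨key, fun S ε hS hε hbSε hμ => ?_⟩
  refine key.trans (mul_le_mul_of_nonneg_right ?_ (by positivity))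
  apply Real.exp_le_exp.mpr
  rw [hbSε, div_div_eq_mul_div, div_le_iff₀ hS]
  calc |μ - μ'| * ε ≤ S * ε := by
        exact mul_le_mul_of_nonneg_right hμ hε.le
    _ = ε * S := mul_comm _ _
end

section
/- Let b > 0, S > 0, ε > 0 with b = S/ε, and let μ, μ' ∈ ℝ with |μ - μ'| ≤ S. Let ν_μ and ν_{μ'} be the measures on ℝ given by the Lebesgue measure with density f_{μ,b} and f_{μ',b} respectively, where f_{μ,b}(t) = (1/(2b)) * exp(-|t - μ|/b). Then for every measurable set O ⊆ ℝ, ν_μ(O) ≤ exp(ε) * ν_{μ'}(O). -/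
open MeasureTheory Real

/-- Measure-theoretic ε-differential-privacy guarantee of the Laplace mechanism:
with scale `b = S/ε` and `|μ - μ'| ≤ S`, the Laplace output measures at locations
`μ` and `μ'` satisfy `ν_μ(O) ≤ exp(ε) * ν_{μ'}(O)` for every measurable `O`. -/
theorem laplace_mechanism_eps_dp (b S ε μ μ' : ℝ) (hb : 0 < b) (hS : 0 < S)
    (hε : 0 < ε) (hbval : b = S / ε) (hsen : |μ - μ'| ≤ S) :
    ∀ O : Set ℝ, MeasurableSet O →
      (volume.withDensity fun t : ℝ =>
          ENNReal.ofReal ((1 / (2 * b)) * Real.exp (-|t - μ| / b))) O ≤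
        ENNReal.ofReal (Real.exp ε) *
          (volume.withDensity fun t : ℝ =>
            ENNReal.ofReal ((1 / (2 * b)) * Real.exp (-|t - μ'| / b))) O := by
  intro O hO
  rw [withDensity_apply _ hO, withDensity_apply _ hO,
    ← lintegral_const_mul' _ _ (by simp)]
  refine lintegral_mono fun t => ?_
  rw [← ENNReal.ofReal_mul (Real.exp_nonneg _)]
  refine ENNReal.ofReal_le_ofReal ?_
  have hc : 0 ≤ 1 / (2 * b) := by positivity
  rw [mul_left_comm]
  refine mul_le_mul_of_nonneg_left ?_ hc
  rw [← Real.exp_add, Real.exp_le_exp]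
  have h1 : |t - μ'| ≤ |t - μ| + |μ - μ'| := by
    calc |t - μ'| = |(t - μ) + (μ - μ')| := by ring_nf
    _ ≤ |t - μ| + |μ - μ'| := abs_add_le _ _
  have hSb : S = ε * b := by rw [hbval]; field_simp
  have : |t - μ'| - |t - μ| ≤ ε * b := by
    nlinarith
  rw [div_le_iff₀ hb, add_mul, div_mul_cancel₀ _ hb.ne']
  linarith
end

section
/- Let P₁, Q₁ be σ-finite measures on a measurable space α and P₂, Q₂ be σ-finite measures on a measurable space β, and let ε₁, ε₂ ≥ 0. Suppose P₁(O) ≤ exp(ε₁) * Q₁(O) for every measurable O ⊆ α and P₂(O) ≤ exp(ε₂) * Q₂(O) for every measurable O ⊆ β. Then for every measurable set O ⊆ α × β, the product measures satisfy (P₁ × P₂)(O) ≤ exp(ε₁ + ε₂) * (Q₁ × Q₂)(O). -/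
open MeasureTheory

/-- Sequential composition of differential privacy, product-measure form: if
`P₁ ≤ exp(ε₁) Q₁` and `P₂ ≤ exp(ε₂) Q₂` setwise, then
`P₁ × P₂ ≤ exp(ε₁ + ε₂) (Q₁ × Q₂)` setwise. -/
theorem dp_sequential_composition {α β : Type*} [MeasurableSpace α] [MeasurableSpace β]
    (P₁ Q₁ : Measure α) (P₂ Q₂ : Measure β)
    [SigmaFinite P₁] [SigmaFinite Q₁] [SigmaFinite P₂] [SigmaFinite Q₂]
    (ε₁ ε₂ : ℝ) (hε₁ : 0 ≤ ε₁) (hε₂ : 0 ≤ ε₂)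
    (h₁ : ∀ O : Set α, MeasurableSet O → P₁ O ≤ ENNReal.ofReal (Real.exp ε₁) * Q₁ O)
    (h₂ : ∀ O : Set β, MeasurableSet O → P₂ O ≤ ENNReal.ofReal (Real.exp ε₂) * Q₂ O) :
    ∀ O : Set (α × β), MeasurableSet O →
      (P₁.prod P₂) O ≤ ENNReal.ofReal (Real.exp (ε₁ + ε₂)) * (Q₁.prod Q₂) O := by
  intro O hO
  have hP1le : P₁ ≤ (ENNReal.ofReal (Real.exp ε₁)) • Q₁ := by
    rw [Measure.le_iff]
    intro s hs
    simpa using h₁ s hs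
  have hmeas : Measurable fun x => Q₂ (Prod.mk x ⁻¹' O) :=
    measurable_measure_prodMk_left hO
  rw [Measure.prod_apply hO, Measure.prod_apply hO]
  calc ∫⁻ x, P₂ (Prod.mk x ⁻¹' O) ∂P₁
      ≤ ∫⁻ x, ENNReal.ofReal (Real.exp ε₂) * Q₂ (Prod.mk x ⁻¹' O) ∂P₁ :=
        lintegral_mono fun x => h₂ _ (measurable_prodMk_left hO)
    _ ≤ ∫⁻ x, ENNReal.ofReal (Real.exp ε₂) * Q₂ (Prod.mk x ⁻¹' O)
          ∂((ENNReal.ofReal (Real.exp ε₁)) • Q₁) :=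
        lintegral_mono' hP1le le_rfl
    _ = ENNReal.ofReal (Real.exp ε₁) * (ENNReal.ofReal (Real.exp ε₂) *
          ∫⁻ x, Q₂ (Prod.mk x ⁻¹' O) ∂Q₁) := by
        rw [lintegral_smul_measure, lintegral_const_mul _ hmeas, smul_eq_mul]
    _ = ENNReal.ofReal (Real.exp (ε₁ + ε₂)) * ∫⁻ x, Q₂ (Prod.mk x ⁻¹' O) ∂Q₁ := by
        rw [Real.exp_add, ENNReal.ofReal_mul (Real.exp_pos ε₁).le, mul_assoc]
end
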